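/- arXiv:1206.0127 — 5 statements merged into one kernel-verified Lean document; each statement's English description precedes it below -/
import Mathlib

section
/- Let I be a compact interval in ℝ, f : I → I a continuous map, and x₀ ∈ I. Suppose that for every point c in the orbit {x₀, f(x₀), f²(x₀), …} of x₀ and every integer n ≥ 2, neither fⁿ(c) ≤ c < f(c) nor f(c) < c ≤ fⁿ(c) holds. Then x₀ is asymptotically periodic of period 1 or 2, i.e., there exists a point y ∈ I with f²(y) = y such that lim_{n→∞} |fⁿ(x₀) − fⁿ(y)| = 0. -/
open Filter Set Function

/-- `J` is a compact subinterval of `I`. -/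
def IsCompactSubinterval (J I : Set ℝ) : Prop :=
  J ⊆ I ∧ ∃ p q : ℝ, p ≤ q ∧ J = Set.Icc p q

/-- `g` is turbulent on the compact interval `J`: there are compact subintervals
`J₀`, `J₁` of `J` with at most one point in common with `g(J₀) ∩ g(J₁) ⊇ J₀ ∪ J₁`. -/
def TurbulentOn (g : ℝ → ℝ) (J : Set ℝ) : Prop :=
  ∃ J₀ J₁ : Set ℝ, IsCompactSubinterval J₀ J ∧ IsCompactSubinterval J₁ J ∧
    (J₀ ∩ J₁).Subsingleton ∧ J₀ ∪ J₁ ⊆ g '' J₀ ∩ g '' J₁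

/-- `g` is doubly turbulent on `I`: it is turbulent on two compact subintervals
of `I` having at most one point in common. -/
def DoublyTurbulentOn (g : ℝ → ℝ) (I : Set ℝ) : Prop :=
  ∃ K L : Set ℝ, IsCompactSubinterval K I ∧ IsCompactSubinterval L I ∧
    (K ∩ L).Subsingleton ∧ TurbulentOn g K ∧ TurbulentOn g L

/-- `y` is a periodic point of `f` of (least) period `m`. -/
def PeriodicPtOfPeriod (f : ℝ → ℝ) (m : ℕ) (y : ℝ) : Prop :=
  f^[m] y = y ∧ ∀ j : ℕ, 0 < j → j < m → f^[j] y ≠ y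

/-- `x` is a chain recurrent point of `f : I → I`. -/
def ChainRecurrentPt (f : ℝ → ℝ) (I : Set ℝ) (x : ℝ) : Prop :=
  x ∈ I ∧ ∀ ε : ℝ, 0 < ε → ∃ n : ℕ, 1 ≤ n ∧ ∃ xs : ℕ → ℝ,
    (∀ i ≤ n, xs i ∈ I) ∧ xs 0 = x ∧ xs n = x ∧ ∀ i < n, |f (xs i) - xs (i + 1)| < ε

/-- `z` belongs to the ω-limit set of `c` under `f`, i.e. `z` is a limit point of
the sequence `(f^[n] c)`. -/
def OmegaLimitPt (f : ℝ → ℝ) (c z : ℝ) : Prop :=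
  ∃ φ : ℕ → ℕ, StrictMono φ ∧ Filter.Tendsto (fun i => f^[φ i] c) Filter.atTop (nhds z)

/-- The sets `K` and `L` lie on opposite sides of the point `z`. -/
def OppositeSides (K L : Set ℝ) (z : ℝ) : Prop :=
  ((∀ x ∈ K, x < z) ∧ (∀ y ∈ L, z < y)) ∨ ((∀ x ∈ K, z < x) ∧ (∀ y ∈ L, y < z))

/-!
Write `xₙ = fⁿ(x₀)`. The hypothesis says that once the orbit moves up from a point it never
returns to or below it, and once it moves down it never returns to or above it. Hence the orbit
is monotone along the times `n` with `xₙ ≤ xₙ₊₁` and antitone along the times with `xₙ₊₁ ≤ xₙ`,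
and by compactness it converges along each of these two classes of times, to `l` and `u` say.
Replacing `xₙ` by the limit of its class gives `zₙ ∈ {l, u}` with `xₙ - zₙ → 0`. Any transition
between classes that occurs infinitely often is respected by `f` on the limits, by continuity,
so eventually `zₙ₊₁ = f(zₙ)`. An orbit inside a two-point set is 2-periodic from its second
point on, so `zₙ = fⁿ(y)` for large `n` and a suitable `y` with `f²(y) = y`.
-/

open Topology

section OrderLimits

variable {α : Type*} [ConditionallyCompleteLinearOrder α] [TopologicalSpace α] [OrderTopology α]
  {s : Set α} {x : ℕ → α} {U : Set ℕ}

theorem exists_mem_tendsto_inf_principal_of_monotoneOn (hs : IsClosed s) (hx : ∀ n, x n ∈ s)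
    (hbdd : BddAbove (range x)) (hmono : MonotoneOn x U) :
    ∃ l ∈ s, Tendsto x (atTop ⊓ 𝓟 U) (𝓝 l) := by
  rcases (atTop ⊓ 𝓟 U).eq_or_neBot with hbot | _
  · exact ⟨x 0, hx 0, hbot ▸ tendsto_bot⟩
  have hU : U.Nonempty :=
    Filter.nonempty_of_mem (f := atTop ⊓ 𝓟 U) (mem_inf_of_right (mem_principal_self U))
  have hlim : Tendsto x (atTop ⊓ 𝓟 U) (𝓝 (sSup (x '' U))) := by
    refine tendsto_order.2 ⟨fun l hl => ?_, fun l hl => ?_⟩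
    · obtain ⟨_, ⟨i, hi, rfl⟩, hli⟩ := exists_lt_of_lt_csSup (hU.image x) hl
      refine eventually_inf_principal.2 ?_
      filter_upwards [eventually_ge_atTop i] with n hin hn using hli.trans_le (hmono hi hn hin)
    · refine eventually_inf_principal.2 (Eventually.of_forall fun n hn => ?_)
      exact (le_csSup (hbdd.mono (image_subset_range x U)) (mem_image_of_mem x hn)).trans_lt hl
  exact ⟨_, hs.mem_of_tendsto hlim (Eventually.of_forall hx), hlim⟩

theorem exists_mem_tendsto_inf_principal_of_antitoneOn (hs : IsClosed s) (hx : ∀ n, x n ∈ s)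
    (hbdd : BddBelow (range x)) (hanti : AntitoneOn x U) :
    ∃ l ∈ s, Tendsto x (atTop ⊓ 𝓟 U) (𝓝 l) :=
  exists_mem_tendsto_inf_principal_of_monotoneOn (α := αᵒᵈ) hs hx hbdd hanti.dual_right

end OrderLimits

section NoReturn

variable {X : Type*} [LinearOrder X] {f : X → X} {x₀ : X}

theorem monotoneOn_iterate_of_not_iterate_le
    (hup : ∀ i n, 2 ≤ n → ¬(f^[n] (f^[i] x₀) ≤ f^[i] x₀ ∧ f^[i] x₀ < f (f^[i] x₀))) :
    MonotoneOn (f^[·] x₀) {n | f^[n] x₀ ≤ f^[n + 1] x₀} := by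
  intro i hi j _ hij
  obtain ⟨n, rfl⟩ := Nat.exists_eq_add_of_le hij
  replace hi : f^[i] x₀ ≤ f (f^[i] x₀) := (iterate_succ_apply' f i x₀) ▸ hi
  simp only [add_comm i, iterate_add_apply]
  rcases hi.lt_or_eq with hlt | heq
  · rcases n with _ | _ | n
    · rfl
    · exact hlt.le
    · exact (not_le.1 (not_and'.1 (hup i (n + 2) (by omega)) hlt)).le
  · rw [iterate_fixed heq.symm]

theorem antitoneOn_iterate_of_not_le_iterate
    (hdown : ∀ i n, 2 ≤ n → ¬(f (f^[i] x₀) < f^[i] x₀ ∧ f^[i] x₀ ≤ f^[n] (f^[i] x₀))) :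
    AntitoneOn (f^[·] x₀) {n | f^[n + 1] x₀ ≤ f^[n] x₀} :=
  monotoneOn_iterate_of_not_iterate_le (X := Xᵒᵈ) fun i n hn h => hdown i n hn h.symm

end NoReturn

section Orbits

variable {X : Type*} {f : X → X}

theorem ContinuousOn.apply_eq_of_tendsto_iterate [TopologicalSpace X] [T2Space X] {s : Set X}
    (hf : ContinuousOn f s) {x₀ a b : X} (hx : ∀ n, f^[n] x₀ ∈ s) (ha : a ∈ s)
    {F : Filter ℕ} [F.NeBot] (hxa : Tendsto (f^[·] x₀) F (𝓝 a))
    (hxb : Tendsto (fun n => f^[n + 1] x₀) F (𝓝 b)) : f a = b := by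
  refine tendsto_nhds_unique ?_ hxb
  simp_rw [iterate_succ_apply']
  exact (hf a ha).tendsto.comp (tendsto_nhdsWithin_iff.2 ⟨hxa, Eventually.of_forall hx⟩)

theorem ContinuousOn.eventually_apply_eq_of_tendsto_iterate_fiberwise [TopologicalSpace X]
    [T2Space X] {ι : Type*} [Finite ι] {s : Set X} (hf : ContinuousOn f s) {x₀ : X}
    (hx : ∀ n, f^[n] x₀ ∈ s) {c : ℕ → ι} {p : ι → X} (hp : ∀ i, p i ∈ s)
    (hlim : ∀ i, Tendsto (f^[·] x₀) (atTop ⊓ 𝓟 (c ⁻¹' {i})) (𝓝 (p i))) :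
    ∀ᶠ n in atTop, f (p (c n)) = p (c (n + 1)) := by
  have hpair : ∀ i j, (∃ᶠ n in atTop, c n = i ∧ c (n + 1) = j) → f (p i) = p j := by
    intro i j hfreq
    have := frequently_iff_neBot.1 hfreq
    refine hf.apply_eq_of_tendsto_iterate (F := atTop ⊓ 𝓟 {n | c n = i ∧ c (n + 1) = j}) hx
      (hp i) ((hlim i).mono_left ?_) ((hlim j).comp (f := (· + 1)) ?_)
    · exact inf_le_inf_left _ (principal_mono.2 fun n hn => hn.1)
    · exact tendsto_inf.2 ⟨(tendsto_add_atTop_nat 1).mono_left inf_le_left,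
        tendsto_principal.2 (mem_inf_of_right fun n hn => hn.2)⟩
  have hfiber : ∀ i j, ∀ᶠ n in atTop, c n = i → c (n + 1) = j → f (p i) = p j := by
    intro i j
    by_cases hfreq : ∃ᶠ n in atTop, c n = i ∧ c (n + 1) = j
    · exact Eventually.of_forall fun _ _ _ => hpair i j hfreq
    · exact (not_frequently.1 hfreq).mono fun n hn hi hj => absurd ⟨hi, hj⟩ hn
  filter_upwards [eventually_all.2 fun i => eventually_all.2 (hfiber i)] with n hn
  exact hn _ _ rfl rfl

theorem isPeriodicPt_two_apply_of_iterate_mem_pair {w a b : X}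
    (h : ∀ n, f^[n] w ∈ ({a, b} : Set X)) : IsPeriodicPt f 2 (f w) := by
  have h0 := h 0
  have h1 := h 1
  have h2 := h 2
  have h3 := h 3
  simp only [iterate_succ_apply', iterate_zero_apply, mem_insert_iff, mem_singleton_iff]
    at h0 h1 h2 h3
  show f (f (f w)) = f w
  -- every self-map `g` of a set with at most two elements satisfies `g ∘ g ∘ g = g`
  grind

theorem eq_iterate_of_forall_ge {z : ℕ → X} {N : ℕ} (hz : ∀ n ≥ N, z (n + 1) = f (z n))
    (m : ℕ) : z (N + m) = f^[m] (z N) := by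
  induction m with
  | zero => rfl
  | succ m ih => rw [iterate_succ_apply', ← ih, ← hz _ (Nat.le_add_right N m), Nat.add_assoc]

theorem exists_isPeriodicPt_two_of_eventually_orbit {z : ℕ → X} {a b : X}
    (hmem : ∀ n, z n ∈ ({a, b} : Set X)) (hz : ∀ᶠ n in atTop, z (n + 1) = f (z n)) :
    ∃ M, IsPeriodicPt f 2 (z M) ∧ ∀ n ≥ M, f^[n] (f^[M] (z M)) = z n := by
  obtain ⟨N, hN⟩ := eventually_atTop.1 hz
  have hper : IsPeriodicPt f 2 (z (N + 1)) := by
    rw [hN N le_rfl]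
    exact isPeriodicPt_two_apply_of_iterate_mem_pair fun m => eq_iterate_of_forall_ge hN m ▸ hmem _
  refine ⟨N + 1, hper, fun n hn => ?_⟩
  obtain ⟨m, rfl⟩ := Nat.exists_eq_add_of_le hn
  have hz' : ∀ n ≥ N + 1, z (n + 1) = f (z n) := fun n hn => hN n (by omega)
  rw [eq_iterate_of_forall_ge hz' m, add_comm, iterate_add_apply, ← iterate_add_apply f (N + 1),
    ← two_mul, (hper.mul_const _).eq]

end Orbits

theorem tendsto_dist_of_tendsto_fiberwise {X ι : Type*} [PseudoMetricSpace X] [Finite ι]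
    {x : ℕ → X} {c : ℕ → ι} {p : ι → X}
    (h : ∀ i, Tendsto x (atTop ⊓ 𝓟 (c ⁻¹' {i})) (𝓝 (p i))) :
    Tendsto (fun n => dist (x n) (p (c n))) atTop (𝓝 0) := by
  refine Metric.tendsto_nhds.2 fun ε hε => ?_
  have hfiber : ∀ i, ∀ᶠ n in atTop, c n = i → dist (x n) (p i) < ε := fun i =>
    eventually_inf_principal.1 (Metric.tendsto_nhds.1 (h i) ε hε)
  filter_upwards [eventually_all.2 hfiber] with n hn
  simpa [abs_of_nonneg dist_nonneg] using hn _ rfl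

theorem stmt_2_general (a b : ℝ) (f : ℝ → ℝ)
    (hf : ContinuousOn f (Set.Icc a b)) (hmaps : Set.MapsTo f (Set.Icc a b) (Set.Icc a b))
    (x₀ : ℝ) (hx₀ : x₀ ∈ Set.Icc a b)
    (h : ∀ i n : ℕ, 2 ≤ n →
      ¬(f^[n] (f^[i] x₀) ≤ f^[i] x₀ ∧ f^[i] x₀ < f (f^[i] x₀)) ∧
      ¬(f (f^[i] x₀) < f^[i] x₀ ∧ f^[i] x₀ ≤ f^[n] (f^[i] x₀))) :
    ∃ y ∈ Set.Icc a b, f^[2] y = y ∧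
      Filter.Tendsto (fun n => |f^[n] x₀ - f^[n] y|) Filter.atTop (nhds 0) := by
  have hx : ∀ n, f^[n] x₀ ∈ Icc a b := fun n => hmaps.iterate n hx₀
  set c : ℕ → Bool := fun n => decide (f^[n] x₀ < f^[n + 1] x₀)
  have hclass : ∀ i, ∃ l ∈ Icc a b, Tendsto (f^[·] x₀) (atTop ⊓ 𝓟 (c ⁻¹' {i})) (𝓝 l) := by
    rintro (_ | _)
    · refine exists_mem_tendsto_inf_principal_of_antitoneOn isClosed_Icc hx
        (bddBelow_Icc.mono (range_subset_iff.2 hx)) ?_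
      exact (antitoneOn_iterate_of_not_le_iterate fun i n hn => (h i n hn).2).mono
        fun n hn => not_lt.1 (of_decide_eq_false (hn : c n = false))
    · refine exists_mem_tendsto_inf_principal_of_monotoneOn isClosed_Icc hx
        (bddAbove_Icc.mono (range_subset_iff.2 hx)) ?_
      exact (monotoneOn_iterate_of_not_iterate_le fun i n hn => (h i n hn).1).mono
        fun n hn => (of_decide_eq_true (hn : c n = true)).le
  choose p hp hlim using hclass
  obtain ⟨M, hper, htrack⟩ := exists_isPeriodicPt_two_of_eventually_orbit
    (z := fun n => p (c n)) (a := p true) (b := p false) (fun n => by cases c n <;> simp)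
    ((hf.eventually_apply_eq_of_tendsto_iterate_fiberwise hx hp hlim).mono fun _ => Eq.symm)
  refine ⟨f^[M] (p (c M)), hmaps.iterate M (hp _), hper.apply_iterate M, ?_⟩
  refine (tendsto_dist_of_tendsto_fiberwise hlim).congr' ?_
  filter_upwards [eventually_ge_atTop M] with n hn
  rw [htrack n hn, Real.dist_eq]

/-- Theorem 1 (B), asymptotic periodicity. -/
theorem stmt_2 (a b : ℝ) (hab : a ≤ b) (f : ℝ → ℝ)
    (hf : ContinuousOn f (Set.Icc a b)) (hmaps : Set.MapsTo f (Set.Icc a b) (Set.Icc a b))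
    (x₀ : ℝ) (hx₀ : x₀ ∈ Set.Icc a b)
    (h : ∀ i n : ℕ, 2 ≤ n →
      ¬(f^[n] (f^[i] x₀) ≤ f^[i] x₀ ∧ f^[i] x₀ < f (f^[i] x₀)) ∧
      ¬(f (f^[i] x₀) < f^[i] x₀ ∧ f^[i] x₀ ≤ f^[n] (f^[i] x₀))) :
    ∃ y ∈ Set.Icc a b, f^[2] y = y ∧
      Filter.Tendsto (fun n => |f^[n] x₀ - f^[n] y|) Filter.atTop (nhds 0) :=
  stmt_2_general a b f hf hmaps x₀ hx₀ h
end

section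
/- Let I be a compact interval in ℝ and f : I → I a continuous map. If there exist a fixed point z of f and a point c ∈ I such that f(c) < c < z or z < c < f(c), then at least one of the following holds: (1) there exists a proper compact subinterval J of I such that c ∈ J, f(J) ⊊ J, and z ∉ J; or (2) f is turbulent on I and has periodic points of all periods m ≥ 1. -/
open Filter Set Function

/-!
Replacing `f` by `x ↦ -f (-x)` we may assume `f c < c < z`. Let `d` be the first fixed point to
the right of `c`, so that `f x < x` on `(c, d)`. If `f < d` on `[a, c]`, then some `[a, v]` with
`c < v < d` is mapped into `[a, v)`. Otherwise let `ξ` be the last point of `[a, c]` with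
`d ≤ f ξ`; then `f < d` on `(ξ, d)`. If some `q ∈ (ξ, d)` has `f q ≤ ξ`, the intervals `[ξ, q]`
and `[q, d]` both `f`-cover `[ξ, d]`: `f` is turbulent, and the periodic orbits following the
itinerary `[q, d] [ξ, q]^(m-1)` have least period `m`. If not, `f > ξ` on `(ξ, d)` and some
`[u, v]` with `ξ < u ≤ c < v < d` is mapped into `[u, v)`.
-/

open scoped Pointwise

def HasTrap (f : ℝ → ℝ) (I : Set ℝ) (c z : ℝ) : Prop :=
  ∃ J : Set ℝ, IsCompactSubinterval J I ∧ J ≠ I ∧ c ∈ J ∧ f '' J ⊂ J ∧ z ∉ J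

def HasAllPeriods (f : ℝ → ℝ) (I : Set ℝ) : Prop :=
  ∀ m : ℕ, 1 ≤ m → ∃ y ∈ I, PeriodicPtOfPeriod f m y

def TrapOrTurbulent (f : ℝ → ℝ) (I : Set ℝ) (c z : ℝ) : Prop :=
  HasTrap f I c z ∨ (TurbulentOn f I ∧ HasAllPeriods f I)

section Development

variable {f : ℝ → ℝ}

lemma IsCompactSubinterval.mono {J I K : Set ℝ} (h : IsCompactSubinterval J I) (hIK : I ⊆ K) :
    IsCompactSubinterval J K :=
  ⟨h.1.trans hIK, h.2⟩

lemma TurbulentOn.mono {I K : Set ℝ} (h : TurbulentOn f I) (hIK : I ⊆ K) : TurbulentOn f K := by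
  obtain ⟨J₀, J₁, h₀, h₁, hJ⟩ := h
  exact ⟨J₀, J₁, h₀.mono hIK, h₁.mono hIK, hJ⟩

lemma HasAllPeriods.mono {I K : Set ℝ} (h : HasAllPeriods f I) (hIK : I ⊆ K) :
    HasAllPeriods f K := fun m hm =>
  let ⟨y, hy, hper⟩ := h m hm
  ⟨y, hIK hy, hper⟩

section Reflection

def negConj (f : ℝ → ℝ) : ℝ → ℝ := fun x => -f (-x)

@[simp] lemma negConj_apply (x : ℝ) : negConj f x = -f (-x) := rfl

@[simp] lemma negConj_negConj (f : ℝ → ℝ) : negConj (negConj f) = f := by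
  funext x
  simp

lemma image_negConj_neg (s : Set ℝ) : negConj f '' (-s) = -(f '' s) := by
  ext y
  simp [neg_eq_iff_eq_neg]

lemma iterate_negConj_neg (n : ℕ) (x : ℝ) : (negConj f)^[n] (-x) = -f^[n] x :=
  ((Semiconj.iterate_right (f := Neg.neg) (fun _ => by simp) n) x).symm

lemma ContinuousOn.negConj {s : Set ℝ} (hf : ContinuousOn f s) : ContinuousOn (negConj f) (-s) :=
  (hf.comp continuousOn_neg fun _ hx => hx).neg

lemma Set.MapsTo.negConj {s : Set ℝ} (hf : MapsTo f s s) : MapsTo (negConj f) (-s) (-s) :=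
  fun x hx => by simpa using hf hx

lemma IsCompactSubinterval.neg {J I : Set ℝ} (h : IsCompactSubinterval J I) :
    IsCompactSubinterval (-J) (-I) := by
  obtain ⟨hJI, p, q, hpq, rfl⟩ := h
  exact ⟨neg_subset_neg.2 hJI, -q, -p, neg_le_neg hpq, neg_Icc p q⟩

lemma TurbulentOn.negConj {I : Set ℝ} (h : TurbulentOn f I) : TurbulentOn (negConj f) (-I) := by
  obtain ⟨J₀, J₁, h₀, h₁, hJ, hcov⟩ := h
  refine ⟨-J₀, -J₁, h₀.neg, h₁.neg, ?_, ?_⟩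
  · rw [← inter_neg]
    exact hJ.preimage neg_injective
  · rw [← union_neg, image_negConj_neg, image_negConj_neg, ← inter_neg]
    exact neg_subset_neg.2 hcov

lemma PeriodicPtOfPeriod.negConj {m : ℕ} {y : ℝ} (h : PeriodicPtOfPeriod f m y) :
    PeriodicPtOfPeriod (negConj f) m (-y) := by
  refine ⟨by rw [iterate_negConj_neg, h.1], fun j hj hjm hy => h.2 j hj hjm ?_⟩
  rwa [iterate_negConj_neg, neg_inj] at hy

lemma HasAllPeriods.negConj {I : Set ℝ} (h : HasAllPeriods f I) :
    HasAllPeriods (negConj f) (-I) := fun m hm =>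
  let ⟨y, hy, hper⟩ := h m hm
  ⟨-y, neg_mem_neg.2 hy, hper.negConj⟩

lemma HasTrap.negConj {I : Set ℝ} {c z : ℝ} (h : HasTrap f I c z) :
    HasTrap (negConj f) (-I) (-c) (-z) := by
  obtain ⟨J, hJ, hJI, hcJ, hfJ, hzJ⟩ := h
  refine ⟨-J, hJ.neg, fun h => hJI (neg_inj.1 h), neg_mem_neg.2 hcJ, ?_, neg_mem_neg.not.2 hzJ⟩
  rw [image_negConj_neg]
  exact ⟨neg_subset_neg.2 hfJ.1, fun h => hfJ.2 (neg_subset_neg.1 h)⟩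

lemma TrapOrTurbulent.negConj {I : Set ℝ} {c z : ℝ} (h : TrapOrTurbulent f I c z) :
    TrapOrTurbulent (negConj f) (-I) (-c) (-z) :=
  h.imp HasTrap.negConj (And.imp TurbulentOn.negConj HasAllPeriods.negConj)

end Reflection

section Covering

lemma isCompact_Icc_inter_preimage {u v : ℝ} (hf : ContinuousOn f (Icc u v)) {t : Set ℝ}
    (ht : IsClosed t) : IsCompact (Icc u v ∩ f ⁻¹' t) :=
  isCompact_Icc.of_isClosed_subset (hf.preimage_isClosed_of_isClosed isClosed_Icc ht)
    inter_subset_left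

lemma exists_subinterval_image_eq_of_le {u v r s : ℝ} (huv : u ≤ v)
    (hf : ContinuousOn f (Icc u v)) (hrs : r ≤ s) (hu : f u = r) (hv : f v = s) :
    ∃ p q, u ≤ p ∧ p ≤ q ∧ q ≤ v ∧ f '' Icc p q = Icc r s := by
  -- `q` is the first point of `[u, v]` sent to `s`, `p` the last point of `[u, q]` sent to `r`
  obtain ⟨q, ⟨hq, hfq⟩, hq_min⟩ :=
    (isCompact_Icc_inter_preimage hf isClosed_singleton).exists_isLeast ⟨v, ⟨huv, le_rfl⟩, hv⟩
  obtain ⟨p, ⟨hp, hfp⟩, hp_max⟩ := (isCompact_Icc_inter_preimage (hf.mono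
    (Icc_subset_Icc_right hq.2)) isClosed_singleton).exists_isGreatest ⟨u, ⟨le_rfl, hq.1⟩, hu⟩
  replace hfq : f q = s := hfq
  replace hfp : f p = r := hfp
  refine ⟨p, q, hp.1, hp.2, hq.2, Subset.antisymm ?_ ?_⟩
  · rintro _ ⟨x, hx, rfl⟩
    refine ⟨le_of_not_gt fun hxr => ?_, le_of_not_gt fun hsx => ?_⟩
    · obtain ⟨y, hy, hfy⟩ := intermediate_value_Icc hx.2
        (hf.mono (Icc_subset_Icc (hp.1.trans hx.1) hq.2)) ⟨hxr.le, hfq ▸ hrs⟩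
      have hyp : y ≤ p := hp_max ⟨⟨hp.1.trans (hx.1.trans hy.1), hy.2⟩, hfy⟩
      rw [le_antisymm hy.1 (hyp.trans hx.1)] at hxr
      exact hxr.ne hfy
    · obtain ⟨y, hy, hfy⟩ := intermediate_value_Icc hx.1
        (hf.mono (Icc_subset_Icc hp.1 (hx.2.trans hq.2))) ⟨hfp ▸ hrs, hsx.le⟩
      have hqy : q ≤ y := hq_min ⟨⟨hp.1.trans hy.1, (hy.2.trans hx.2).trans hq.2⟩, hfy⟩
      rw [← le_antisymm hy.2 (hx.2.trans hqy)] at hsx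
      exact hsx.ne' hfy
  · rw [← hfp, ← hfq]
    exact intermediate_value_Icc hp.2 (hf.mono (Icc_subset_Icc hp.1 hq.2))

lemma Set.SurjOn.exists_subinterval_image_eq {p q r s : ℝ} (hf : ContinuousOn f (Icc p q))
    (hsurj : SurjOn f (Icc p q) (Icc r s)) (hrs : r ≤ s) :
    ∃ p' q', p ≤ p' ∧ p' ≤ q' ∧ q' ≤ q ∧ f '' Icc p' q' = Icc r s := by
  obtain ⟨u, hu, hfu⟩ := hsurj (left_mem_Icc.2 hrs)
  obtain ⟨v, hv, hfv⟩ := hsurj (right_mem_Icc.2 hrs)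
  rcases le_total u v with huv | hvu
  · obtain ⟨p', q', hp', hpq', hq', himg⟩ := exists_subinterval_image_eq_of_le huv
      (hf.mono (Icc_subset_Icc hu.1 hv.2)) hrs hfu hfv
    exact ⟨p', q', hu.1.trans hp', hpq', hq'.trans hv.2, himg⟩
  · obtain ⟨p', q', hp', hpq', hq', himg⟩ := exists_subinterval_image_eq_of_le
      (f := fun x => -f x) hvu (hf.mono (Icc_subset_Icc hv.1 hu.2)).neg (neg_le_neg hrs)
      (by rw [hfv]) (by rw [hfu])
    refine ⟨p', q', hv.1.trans hp', hpq', hq'.trans hu.2, neg_inj.1 ?_⟩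
    rw [neg_Icc, ← himg, ← image_neg_eq_neg, image_image]

variable {S : Set ℝ} {P Q : ℕ → ℝ}

lemma exists_subinterval_iterate_image_eq (hf : ContinuousOn f S) (hS : MapsTo f S S)
    (hPQ : ∀ i, P i ≤ Q i) (hPQS : ∀ i, Icc (P i) (Q i) ⊆ S)
    (hcov : ∀ i, SurjOn f (Icc (P i) (Q i)) (Icc (P (i + 1)) (Q (i + 1)))) (n : ℕ) :
    ∃ p q, P 0 ≤ p ∧ p ≤ q ∧ q ≤ Q 0 ∧ f^[n] '' Icc p q = Icc (P n) (Q n) ∧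
      ∀ j ≤ n, MapsTo f^[j] (Icc p q) (Icc (P j) (Q j)) := by
  induction n with
  | zero =>
    refine ⟨P 0, Q 0, le_rfl, hPQ 0, le_rfl, image_id _, fun j hj => ?_⟩
    obtain rfl := Nat.le_zero.1 hj
    exact mapsTo_id _
  | succ n ih =>
    obtain ⟨p, q, hp, hpq, hq, himg, hmaps⟩ := ih
    have hsurj : SurjOn f^[n + 1] (Icc p q) (Icc (P (n + 1)) (Q (n + 1))) := by
      rw [iterate_succ', SurjOn, image_comp, himg]
      exact hcov n
    obtain ⟨p', q', hp', hpq', hq', himg'⟩ := hsurj.exists_subinterval_image_eq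
      ((hf.iterate hS _).mono ((Icc_subset_Icc hp hq).trans (hPQS 0))) (hPQ _)
    refine ⟨p', q', hp.trans hp', hpq', hq'.trans hq, himg', fun j hj => ?_⟩
    rcases hj.lt_or_eq with hj | rfl
    · exact (hmaps j (Nat.lt_succ_iff.1 hj)).mono_left (Icc_subset_Icc hp' hq')
    · exact himg' ▸ mapsTo_image _ _

lemma exists_iterate_fixedPt_of_cyclic_cover (hf : ContinuousOn f S) (hS : MapsTo f S S)
    (hPQ : ∀ i, P i ≤ Q i) (hPQS : ∀ i, Icc (P i) (Q i) ⊆ S)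
    (hcov : ∀ i, SurjOn f (Icc (P i) (Q i)) (Icc (P (i + 1)) (Q (i + 1)))) {m : ℕ}
    (hPm : P m = P 0) (hQm : Q m = Q 0) :
    ∃ y, f^[m] y = y ∧ ∀ j ≤ m, f^[j] y ∈ Icc (P j) (Q j) := by
  obtain ⟨p, q, hp, hpq, hq, himg, hmaps⟩ :=
    exists_subinterval_iterate_image_eq hf hS hPQ hPQS hcov m
  have hsurj : SurjOn f^[m] (Icc p q) (Icc p q) := by
    rw [SurjOn, himg, hPm, hQm]
    exact Icc_subset_Icc hp hq
  obtain ⟨y, hy, hfy⟩ := exists_mem_Icc_isFixedPt_of_surjOn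
    ((hf.iterate hS m).mono ((Icc_subset_Icc hp hq).trans (hPQS 0))) hpq hsurj
  exact ⟨y, hfy, fun j hj => hmaps j hj hy⟩

end Covering

section Horseshoe

variable {ξ q d : ℝ}

lemma turbulentOn_Icc_of_surjOn (hξq : ξ ≤ q) (hqd : q ≤ d)
    (h₀ : SurjOn f (Icc ξ q) (Icc ξ d)) (h₁ : SurjOn f (Icc q d) (Icc ξ d)) :
    TurbulentOn f (Icc ξ d) := by
  refine ⟨Icc ξ q, Icc q d, ⟨Icc_subset_Icc_right hqd, ξ, q, hξq, rfl⟩,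
    ⟨Icc_subset_Icc_left hξq, q, d, hqd, rfl⟩, ?_, ?_⟩
  · rw [Icc_inter_Icc_eq_singleton hξq hqd]
    exact subsingleton_singleton
  · rw [Icc_union_Icc_eq_Icc hξq hqd]
    exact subset_inter h₀ h₁

lemma hasAllPeriods_of_surjOn {S : Set ℝ} (hf : ContinuousOn f S) (hS : MapsTo f S S)
    (hξdS : Icc ξ d ⊆ S) (hξq : ξ < q) (hqd : q ≤ d)
    (h₀ : SurjOn f (Icc ξ q) (Icc ξ d)) (h₁ : SurjOn f (Icc q d) (Icc ξ d))
    (hfq : f q ≤ ξ) (hfξ : q < f ξ) : HasAllPeriods f (Icc ξ d) := by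
  intro m hm
  set P : ℕ → ℝ := fun i => if i % m = 0 then q else ξ
  set Q : ℕ → ℝ := fun i => if i % m = 0 then d else q
  have hsub : ∀ i, Icc (P i) (Q i) ⊆ Icc ξ d := fun i => by
    simp only [P, Q]
    split_ifs
    exacts [Icc_subset_Icc_left hξq.le, Icc_subset_Icc_right hqd]
  have hcov : ∀ i, SurjOn f (Icc (P i) (Q i)) (Icc ξ d) := fun i => by
    simp only [P, Q]
    split_ifs
    exacts [h₁, h₀]
  have hPQ : ∀ i, P i ≤ Q i := fun i => by
    simp only [P, Q]
    split_ifs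
    exacts [hqd, hξq.le]
  obtain ⟨y, hym, hit⟩ := exists_iterate_fixedPt_of_cyclic_cover hf hS hPQ
    (fun i => (hsub i).trans hξdS) (fun i => (hcov i).mono subset_rfl (hsub (i + 1)))
    (m := m) (by simp [P]) (by simp [Q])
  have hy : y ∈ Icc q d := by simpa [P, Q] using hit 0 m.zero_le
  have hinner : ∀ i, 0 < i → i < m → f^[i] y ∈ Icc ξ q := fun i hi him => by
    simpa [P, Q, Nat.mod_eq_of_lt him, hi.ne'] using hit i him.le
  refine ⟨y, Icc_subset_Icc_left hξq.le hy, hym, fun j hj hjm hfj => ?_⟩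
  -- a shorter period puts `y` in `[ξ, q] ∩ [q, d] = {q}`, but `q ↦ ξ ↦ f ξ > q` leaves `[ξ, q]`
  have hyq : y = q := le_antisymm (hfj ▸ hinner j hj hjm).2 hy.1
  have hf1 : f q ∈ Icc ξ q := by simpa [hyq] using hinner 1 one_pos (by omega)
  rcases (show j = 1 ∨ 2 ≤ j by omega) with rfl | hj
  · rw [iterate_one, hyq] at hfj
    linarith
  · have hf2 := hinner 2 two_pos (by omega)
    rw [iterate_succ_apply, iterate_one, hyq, le_antisymm hfq hf1.1] at hf2
    exact hfξ.not_ge hf2.2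

lemma turbulentOn_and_hasAllPeriods_of_horseshoe {S : Set ℝ} (hf : ContinuousOn f S)
    (hS : MapsTo f S S) (hξdS : Icc ξ d ⊆ S) (hξq : ξ < q) (hqd : q < d)
    (hfq : f q ≤ ξ) (hfξ : d ≤ f ξ) (hfd : d ≤ f d) :
    TurbulentOn f (Icc ξ d) ∧ HasAllPeriods f (Icc ξ d) := by
  have h₀ : SurjOn f (Icc ξ q) (Icc ξ d) := (Icc_subset_Icc hfq hfξ).trans
    (intermediate_value_Icc' hξq.le (hf.mono ((Icc_subset_Icc_right hqd.le).trans hξdS)))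
  have h₁ : SurjOn f (Icc q d) (Icc ξ d) := (Icc_subset_Icc hfq hfd).trans
    (intermediate_value_Icc hqd.le (hf.mono ((Icc_subset_Icc_left hξq.le).trans hξdS)))
  exact ⟨turbulentOn_Icc_of_surjOn hξq.le hqd.le h₀ h₁,
    hasAllPeriods_of_surjOn hf hS hξdS hξq hqd.le h₀ h₁ hfq (hqd.trans_le hfξ)⟩

end Horseshoe

section Trap

variable {a b c d z : ℝ}

lemma exists_first_fixedPt_above (hcz : c ≤ z) (hf : ContinuousOn f (Icc c z)) (hfc : f c < c)
    (hfz : z ≤ f z) : ∃ d ∈ Ioc c z, f d = d ∧ ∀ x ∈ Ioo c d, f x < x := by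
  obtain ⟨d, ⟨hd, hfd⟩, hd_min⟩ := (isCompact_Icc_inter_preimage (hf.sub continuousOn_id)
    isClosed_Ici).exists_isLeast ⟨z, ⟨hcz, le_rfl⟩, sub_nonneg.2 hfz⟩
  replace hfd : d ≤ f d := sub_nonneg.1 hfd
  have hbelow : ∀ x ∈ Ico c d, f x < x := fun x hx => lt_of_not_ge fun hxf =>
    (hd_min ⟨⟨hx.1, hx.2.le.trans hd.2⟩, sub_nonneg.2 hxf⟩).not_gt hx.2
  have hcd : c < d := hd.1.lt_of_ne fun h => (h ▸ hfc).not_ge hfd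
  obtain ⟨y, hy, hfy⟩ := exists_mem_uIcc_isFixedPt
    (hf.mono (uIcc_subset_Icc hd (left_mem_Icc.2 hcz))) hfd hfc.le
  rw [uIcc_of_ge hcd.le] at hy
  have hyd : y = d := hy.2.eq_of_not_lt fun hyd => (hbelow y ⟨hy.1, hyd⟩).ne hfy
  exact ⟨d, ⟨hcd, hd.2⟩, hyd ▸ hfy, fun x hx => hbelow x (Ioo_subset_Ico_self hx)⟩

lemma exists_forall_Icc_lt {u : ℝ} (huc : u ≤ c) (hf : ContinuousOn f (Icc u c))
    (hlt : ∀ x ∈ Icc u c, f x < d) (hbelow : ∀ x ∈ Ioo c d, f x < x) (hcd : c < d) :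
    ∃ v, c < v ∧ v < d ∧ ∀ x ∈ Icc u v, f x < v := by
  obtain ⟨x₀, hx₀, hmax⟩ := isCompact_Icc.exists_isMaxOn (nonempty_Icc.2 huc) hf
  obtain ⟨v, hv, hvd⟩ := exists_between (max_lt (hlt x₀ hx₀) hcd)
  refine ⟨v, (le_max_right _ _).trans_lt hv, hvd, fun x hx => ?_⟩
  rcases le_or_gt x c with hxc | hcx
  · exact (isMaxOn_iff.1 hmax x ⟨hx.1, hxc⟩).trans_lt ((le_max_left _ _).trans_lt hv)
  · exact (hbelow x ⟨hcx, hx.2.trans_lt hvd⟩).trans_le hx.2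

lemma hasTrap_of_forall_Icc_mem_Ico {u v : ℝ} (hz : z ∈ Icc a b) (hau : a ≤ u) (hvz : v < z)
    (hc : c ∈ Icc u v) (hJ : ∀ x ∈ Icc u v, u ≤ f x ∧ f x < v) : HasTrap f (Icc a b) c z := by
  have hzJ : z ∉ Icc u v := fun h => hvz.not_ge h.2
  refine ⟨Icc u v, ⟨Icc_subset_Icc hau (hvz.le.trans hz.2), u, v, hc.1.trans hc.2, rfl⟩,
    fun h => hzJ (h ▸ hz), hc, ?_, hzJ⟩
  have hsub : f '' Icc u v ⊆ Icc u v := image_subset_iff.2 fun x hx => ⟨(hJ x hx).1, (hJ x hx).2.le⟩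
  refine (ssubset_iff_of_subset hsub).2 ⟨v, right_mem_Icc.2 (hc.1.trans hc.2), ?_⟩
  rintro ⟨x, hx, hfx⟩
  exact (hJ x hx).2.ne hfx

lemma hasTrap_of_forall_Icc_lt (hf : ContinuousOn f (Icc a b))
    (hmaps : MapsTo f (Icc a b) (Icc a b)) (hz : z ∈ Icc a b) (hac : a ≤ c) (hcd : c < d)
    (hdz : d ≤ z) (hbelow : ∀ x ∈ Ioo c d, f x < x) (hlt : ∀ x ∈ Icc a c, f x < d) :
    HasTrap f (Icc a b) c z := by
  have hdb : d ≤ b := hdz.trans hz.2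
  obtain ⟨v, hcv, hvd, hv⟩ := exists_forall_Icc_lt hac
    (hf.mono (Icc_subset_Icc_right (hcd.le.trans hdb))) hlt hbelow hcd
  exact hasTrap_of_forall_Icc_mem_Ico hz le_rfl (hvd.trans_le hdz) ⟨hac, hcv.le⟩ fun x hx =>
    ⟨(hmaps ⟨hx.1, hx.2.trans (hvd.le.trans hdb)⟩).1, hv x hx⟩

lemma hasTrap_of_forall_Ioo_gt {ξ : ℝ} (hf : ContinuousOn f (Icc a b)) (hz : z ∈ Icc a b)
    (haξ : a ≤ ξ) (hξc : ξ < c) (hcd : c < d) (hdz : d ≤ z) (hfξ : d ≤ f ξ) (hfd : f d = d)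
    (hbelow : ∀ x ∈ Ioo c d, f x < x) (hlt : ∀ x ∈ Ioo ξ d, f x < d)
    (hgt : ∀ x ∈ Ioo ξ d, ξ < f x) : HasTrap f (Icc a b) c z := by
  have hdb : d ≤ b := hdz.trans hz.2
  have hξd : ξ < d := hξc.trans hcd
  obtain ⟨x₀, hx₀, hmin⟩ := isCompact_Icc.exists_isMinOn (nonempty_Icc.2 hξd.le)
    (hf.mono (Icc_subset_Icc haξ hdb))
  have hξμ : ξ < f x₀ := by
    rcases hx₀.1.eq_or_lt with h | h₁
    · rw [← h]
      exact hξd.trans_le hfξ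
    rcases hx₀.2.eq_or_lt with h | h₂
    · rwa [h, hfd]
    · exact hgt x₀ ⟨h₁, h₂⟩
  have hξu : ξ < min (f x₀) c := lt_min hξμ hξc
  obtain ⟨v, hcv, hvd, hv⟩ := exists_forall_Icc_lt (min_le_right _ c)
    (hf.mono (Icc_subset_Icc (haξ.trans hξu.le) (hcd.le.trans hdb)))
    (fun x hx => hlt x ⟨hξu.trans_le hx.1, hx.2.trans_lt hcd⟩) hbelow hcd
  exact hasTrap_of_forall_Icc_mem_Ico hz (haξ.trans hξu.le) (hvd.trans_le hdz)
    ⟨min_le_right _ _, hcv.le⟩ fun x hx =>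
      ⟨(min_le_left _ _).trans (isMinOn_iff.1 hmin x ⟨hξu.le.trans hx.1, hx.2.trans hvd.le⟩),
        hv x hx⟩

theorem trapOrTurbulent_of_lt (hf : ContinuousOn f (Icc a b))
    (hmaps : MapsTo f (Icc a b) (Icc a b)) (hz : z ∈ Icc a b) (hfz : f z = z)
    (hc : c ∈ Icc a b) (hfc : f c < c) (hcz : c < z) : TrapOrTurbulent f (Icc a b) c z := by
  obtain ⟨d, ⟨hcd, hdz⟩, hfd, hbelow⟩ :=
    exists_first_fixedPt_above hcz.le (hf.mono (Icc_subset_Icc hc.1 hz.2)) hfc hfz.ge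
  by_cases hA : ∀ x ∈ Icc a c, f x < d
  · exact .inl (hasTrap_of_forall_Icc_lt hf hmaps hz hc.1 hcd hdz hbelow hA)
  push Not at hA
  obtain ⟨ξ, ⟨hξ, hfξ⟩, hξ_max⟩ := (isCompact_Icc_inter_preimage (hf.mono
    (Icc_subset_Icc_right hc.2)) isClosed_Ici).exists_isGreatest hA
  replace hfξ : d ≤ f ξ := hfξ
  have hξc : ξ < c := hξ.2.lt_of_ne fun h => (hfc.trans hcd).not_ge (h ▸ hfξ)
  have hlt : ∀ x ∈ Ioo ξ d, f x < d := fun x hx => by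
    rcases le_or_gt x c with hxc | hcx
    · exact lt_of_not_ge fun hdx => (hξ_max ⟨⟨hξ.1.trans hx.1.le, hxc⟩, hdx⟩).not_gt hx.1
    · exact (hbelow x ⟨hcx, hx.2⟩).trans hx.2
  by_cases hB : ∃ q ∈ Ioo ξ d, f q ≤ ξ
  · obtain ⟨q, ⟨hξq, hqd⟩, hfq⟩ := hB
    have hξdI : Icc ξ d ⊆ Icc a b := Icc_subset_Icc hξ.1 (hdz.trans hz.2)
    obtain ⟨hturb, hper⟩ := turbulentOn_and_hasAllPeriods_of_horseshoe hf hmaps hξdI hξq hqd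
      hfq hfξ hfd.ge
    exact .inr ⟨hturb.mono hξdI, hper.mono hξdI⟩
  · push Not at hB
    exact .inl (hasTrap_of_forall_Ioo_gt hf hz hξ.1 hξc hcd hdz hfξ hfd hbelow hlt hB)

end Trap

end Development

theorem stmt_11_general (a b : ℝ) (f : ℝ → ℝ)
    (hf : ContinuousOn f (Set.Icc a b)) (hmaps : Set.MapsTo f (Set.Icc a b) (Set.Icc a b))
    (z : ℝ) (hz : z ∈ Set.Icc a b) (hfz : f z = z)
    (c : ℝ) (hc : c ∈ Set.Icc a b)
    (h : (f c < c ∧ c < z) ∨ (z < c ∧ c < f c)) :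
    (∃ J : Set ℝ, IsCompactSubinterval J (Set.Icc a b) ∧ J ≠ Set.Icc a b ∧
        c ∈ J ∧ f '' J ⊂ J ∧ z ∉ J) ∨
    (TurbulentOn f (Set.Icc a b) ∧
      ∀ m : ℕ, 1 ≤ m → ∃ y ∈ Set.Icc a b, PeriodicPtOfPeriod f m y) := by
  rcases h with ⟨hfc, hcz⟩ | ⟨hzc, hcf⟩
  · exact trapOrTurbulent_of_lt hf hmaps hz hfz hc hfc hcz
  · have hreflected := trapOrTurbulent_of_lt (neg_Icc a b ▸ hf.negConj)
      (neg_Icc a b ▸ hmaps.negConj) (neg_Icc a b ▸ neg_mem_neg.2 hz) (by simp [hfz])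
      (neg_Icc a b ▸ neg_mem_neg.2 hc) (by simpa using hcf) (neg_lt_neg hzc)
    have := hreflected.negConj
    rwa [negConj_negConj, neg_Icc, neg_neg, neg_neg, neg_neg, neg_neg] at this

/-- Theorem 3. -/
theorem stmt_11 (a b : ℝ) (hab : a ≤ b) (f : ℝ → ℝ)
    (hf : ContinuousOn f (Set.Icc a b)) (hmaps : Set.MapsTo f (Set.Icc a b) (Set.Icc a b))
    (z : ℝ) (hz : z ∈ Set.Icc a b) (hfz : f z = z)
    (c : ℝ) (hc : c ∈ Set.Icc a b)
    (h : (f c < c ∧ c < z) ∨ (z < c ∧ c < f c)) :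
    (∃ J : Set ℝ, IsCompactSubinterval J (Set.Icc a b) ∧ J ≠ Set.Icc a b ∧
        c ∈ J ∧ f '' J ⊂ J ∧ z ∉ J) ∨
    (TurbulentOn f (Set.Icc a b) ∧
      ∀ m : ℕ, 1 ≤ m → ∃ y ∈ Set.Icc a b, PeriodicPtOfPeriod f m y) :=
  stmt_11_general a b f hf hmaps z hz hfz c hc h
end

section
/- Let I be a compact interval in ℝ and f : I → I a continuous map. If there exist a fixed point z of f, a point c ∈ I, and an integer n ≥ 2 such that f(c) < c < z ≤ fⁿ(c), or fⁿ(c) ≤ z < c < f(c), then f is turbulent on I and has periodic points of all periods m ≥ 1. -/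
open Filter Set Function

/-!
Let `w` be the first point to the right of `c` with `w ≤ f w`; on `[c, w)` the map moves points to
the left, so the orbit of `c` reaches `[w, b]` only from some orbit point `d < c`. Let `e` be the
orbit point from which the orbit first falls into `[a, d]`. Then `d < e < w`, `f e ≤ d`,
`w ≤ f d` and `w ≤ f w`, so by the intermediate value theorem both `[d, e]` and `[e, w]` are
mapped over `[d, w]`: this horseshoe is the turbulence. Following the itinerary
`[d, e] → [e, w] → ⋯ → [e, w] → [d, e]` of length `m` gives a point of period `m`, and its period
is least because `f e < e` keeps the common endpoint `e` off such an orbit. The mirrored case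
follows by conjugating with `x ↦ -x`.
-/

theorem ContinuousOn.isCompact_Icc_inter_preimage {X Y : Type*} [LinearOrder X]
    [TopologicalSpace X] [OrderClosedTopology X] [CompactIccSpace X] [TopologicalSpace Y]
    {f : X → Y} {p q : X} (hf : ContinuousOn f (Icc p q)) {s : Set Y} (hs : IsClosed s) :
    IsCompact (Icc p q ∩ f ⁻¹' s) :=
  isCompact_Icc.of_isClosed_subset (hf.preimage_isClosed_of_isClosed isClosed_Icc hs)
    inter_subset_left

theorem Nat.exists_lt_forall_le_not_and_succ {P : ℕ → Prop} (h0 : ¬P 0) {n : ℕ} (hn : P n) :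
    ∃ j < n, (∀ i ≤ j, ¬P i) ∧ P (j + 1) := by
  classical
  have hex : ∃ n, P n := ⟨n, hn⟩
  obtain ⟨j, hj⟩ := Nat.exists_eq_add_one_of_ne_zero fun h => h0 (h ▸ Nat.find_spec hex)
  have hle := Nat.find_min' hex hn
  exact ⟨j, by omega, fun i hi => Nat.find_min hex (by omega), hj ▸ Nat.find_spec hex⟩

theorem exists_Icc_subset_image_eq_of_le {f : ℝ → ℝ} {x₀ x₁ : ℝ} (h₀₁ : x₀ ≤ x₁)
    (hf : ContinuousOn f (Icc x₀ x₁)) (hf₀₁ : f x₀ ≤ f x₁) :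
    ∃ u v, Icc u v ⊆ Icc x₀ x₁ ∧ f '' Icc u v = Icc (f x₀) (f x₁) := by
  obtain ⟨v, ⟨hvI, hfv⟩, hv⟩ :=
    (hf.isCompact_Icc_inter_preimage isClosed_singleton).exists_isLeast
      ⟨x₁, right_mem_Icc.2 h₀₁, rfl⟩
  have hf₀v : ContinuousOn f (Icc x₀ v) := hf.mono (Icc_subset_Icc_right hvI.2)
  obtain ⟨u, ⟨huI, hfu⟩, hu⟩ :=
    (hf₀v.isCompact_Icc_inter_preimage isClosed_singleton).exists_isGreatest
      ⟨x₀, left_mem_Icc.2 hvI.1, rfl⟩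
  simp only [mem_preimage, mem_singleton_iff] at hfu hfv
  have hfuv : ContinuousOn f (Icc u v) := hf₀v.mono (Icc_subset_Icc_left huI.1)
  refine ⟨u, v, Icc_subset_Icc huI.1 hvI.2, Subset.antisymm ?_ ?_⟩
  · rintro _ ⟨x, hx, rfl⟩
    constructor
    · by_contra! hx_lt
      -- the value `f x₀` is attained again in `[x, v]`, beyond the last such point `u`
      obtain ⟨ξ, hξ, hfξ⟩ := intermediate_value_Icc hx.2 (hfuv.mono (Icc_subset_Icc_left hx.1))
        ⟨hx_lt.le, hfv ▸ hf₀₁⟩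
      have hξu : ξ ≤ u := hu ⟨⟨huI.1.trans (hx.1.trans hξ.1), hξ.2⟩, hfξ⟩
      rw [le_antisymm (hξu.trans hx.1) hξ.1] at hfξ
      exact hx_lt.ne hfξ
    · by_contra! hx_gt
      obtain ⟨ξ, hξ, hfξ⟩ := intermediate_value_Icc hx.1 (hfuv.mono (Icc_subset_Icc_right hx.2))
        ⟨hfu ▸ hf₀₁, hx_gt.le⟩
      have hvξ : v ≤ ξ := hv ⟨⟨huI.1.trans hξ.1, hξ.2.trans (hx.2.trans hvI.2)⟩, hfξ⟩
      rw [le_antisymm hξ.2 (hx.2.trans hvξ)] at hfξ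
      exact hx_gt.ne' hfξ
  · simpa only [hfu, hfv] using intermediate_value_Icc huI.2 hfuv

theorem exists_Icc_subset_image_eq {f : ℝ → ℝ} {p q r s : ℝ} (hf : ContinuousOn f (Icc p q))
    (hrs : r ≤ s) (h : Icc r s ⊆ f '' Icc p q) :
    ∃ u v, Icc u v ⊆ Icc p q ∧ f '' Icc u v = Icc r s := by
  obtain ⟨x₀, hx₀, rfl⟩ := h (left_mem_Icc.2 hrs)
  obtain ⟨x₁, hx₁, rfl⟩ := h (right_mem_Icc.2 hrs)
  rcases le_total x₀ x₁ with h₀₁ | h₁₀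
  · obtain ⟨u, v, hsub, himg⟩ :=
      exists_Icc_subset_image_eq_of_le h₀₁ (hf.mono (Icc_subset_Icc hx₀.1 hx₁.2)) hrs
    exact ⟨u, v, hsub.trans (Icc_subset_Icc hx₀.1 hx₁.2), himg⟩
  · have hsub₁₀ : Icc x₁ x₀ ⊆ Icc p q := Icc_subset_Icc hx₁.1 hx₀.2
    have hg : ContinuousOn (f ∘ Neg.neg) (Icc (-x₀) (-x₁)) := by
      refine (hf.mono hsub₁₀).comp continuousOn_neg fun x hx => ?_
      simpa [← neg_Icc] using hx
    obtain ⟨u, v, hsub, himg⟩ :=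
      exists_Icc_subset_image_eq_of_le (neg_le_neg h₁₀) hg (by simpa using hrs)
    refine ⟨-v, -u, ?_, ?_⟩
    · calc Icc (-v) (-u) = -Icc u v := (neg_Icc u v).symm
        _ ⊆ -Icc (-x₀) (-x₁) := neg_subset_neg.2 hsub
        _ = Icc x₁ x₀ := by rw [neg_Icc, neg_neg, neg_neg]
        _ ⊆ Icc p q := hsub₁₀
    · rw [← image_neg_Icc, ← image_comp]
      simpa using himg

theorem exists_Icc_iterate_image_eq {f : ℝ → ℝ} {l r : ℕ → ℝ} (hlr : ∀ i, l i ≤ r i)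
    (hf : ∀ i, ContinuousOn f (Icc (l i) (r i)))
    (hsurj : ∀ i, SurjOn f (Icc (l i) (r i)) (Icc (l (i + 1)) (r (i + 1)))) (m : ℕ) :
    ∃ u v, ContinuousOn f^[m] (Icc u v) ∧ (∀ i ≤ m, MapsTo f^[i] (Icc u v) (Icc (l i) (r i))) ∧
      f^[m] '' Icc u v = Icc (l m) (r m) := by
  induction m generalizing l r with
  | zero =>
    refine ⟨l 0, r 0, continuousOn_id, fun i hi => ?_, image_id _⟩
    obtain rfl := Nat.le_zero.1 hi
    exact mapsTo_id _
  | succ m ih =>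
    obtain ⟨u', v', hcont', hmaps', himg'⟩ :=
      ih (fun i => hlr (i + 1)) (fun i => hf (i + 1)) (fun i => hsurj (i + 1))
    have huv' : u' ≤ v' := by
      have := (nonempty_Icc.2 (hlr (m + 1))).mono himg'.ge
      exact nonempty_Icc.1 this.of_image
    obtain ⟨u, v, hsub, himg⟩ :=
      exists_Icc_subset_image_eq (hf 0) huv' fun x hx => hsurj 0 (hmaps' 0 m.zero_le hx)
    have hmaps : MapsTo f (Icc u v) (Icc u' v') := himg ▸ mapsTo_image f _
    refine ⟨u, v, ?_, fun i hi => ?_, ?_⟩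
    · rw [iterate_succ]
      exact hcont'.comp ((hf 0).mono hsub) hmaps
    · cases i with
      | zero => exact hsub
      | succ i => exact (hmaps' i (by omega)).comp hmaps
    · rw [iterate_succ, image_comp, himg, himg']

theorem exists_isPeriodicPt_of_surjOn_chain {f : ℝ → ℝ} {l r : ℕ → ℝ} (hlr : ∀ i, l i ≤ r i)
    (hf : ∀ i, ContinuousOn f (Icc (l i) (r i)))
    (hsurj : ∀ i, SurjOn f (Icc (l i) (r i)) (Icc (l (i + 1)) (r (i + 1)))) {m : ℕ}
    (hl : l m = l 0) (hr : r m = r 0) :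
    ∃ x, IsPeriodicPt f m x ∧ ∀ i ≤ m, f^[i] x ∈ Icc (l i) (r i) := by
  obtain ⟨u, v, hcont, hmaps, himg⟩ := exists_Icc_iterate_image_eq hlr hf hsurj m
  have huv : u ≤ v := nonempty_Icc.1 ((nonempty_Icc.2 (hlr m)).mono himg.ge).of_image
  have hsurj_m : SurjOn f^[m] (Icc u v) (Icc u v) := by
    rw [SurjOn, himg, hl, hr]
    exact hmaps 0 m.zero_le
  obtain ⟨x, hx, hfix⟩ := exists_mem_Icc_isFixedPt_of_surjOn hcont huv hsurj_m
  exact ⟨x, hfix, fun i hi => hmaps i hi hx⟩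

theorem exists_periodicPtOfPeriod_of_horseshoe {f : ℝ → ℝ} {t e w : ℝ} (hte : t ≤ e)
    (hew : e ≤ w) (hf : ContinuousOn f (Icc t w)) (h₀ : SurjOn f (Icc t e) (Icc t w))
    (h₁ : SurjOn f (Icc e w) (Icc t w)) (hfe : f e < e) (m : ℕ) :
    ∃ y ∈ Icc t e, PeriodicPtOfPeriod f m y := by
  -- the itinerary `J₀ J₁ ⋯ J₁ J₀ ⋯` of period `m`, with `J₀ = [t, e]` and `J₁ = [e, w]`
  set l : ℕ → ℝ := fun i => if m ∣ i then t else e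
  set r : ℕ → ℝ := fun i => if m ∣ i then e else w
  have hJ : ∀ i, Icc (l i) (r i) ⊆ Icc t w := fun i => by
    by_cases hi : m ∣ i <;> simp only [l, r, hi, if_true, if_false]
    exacts [Icc_subset_Icc_right hew, Icc_subset_Icc_left hte]
  have hsurj : ∀ i j, SurjOn f (Icc (l i) (r i)) (Icc (l j) (r j)) := fun i j => by
    by_cases hi : m ∣ i
    · simpa only [l, r, hi, if_true] using h₀.mono subset_rfl (hJ j)
    · simpa only [l, r, hi, if_false] using h₁.mono subset_rfl (hJ j)
  have hlr : ∀ i, l i ≤ r i := fun i => by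
    by_cases hi : m ∣ i <;> simp only [l, r, hi, if_true, if_false]
    exacts [hte, hew]
  obtain ⟨x, hx, hitin⟩ := exists_isPeriodicPt_of_surjOn_chain hlr (fun i => hf.mono (hJ i))
    (fun i => hsurj i (i + 1)) (m := m) (by simp [l]) (by simp [r])
  have hx₀ : x ∈ Icc t e := by simpa [l, r] using hitin 0 m.zero_le
  have hx₁ : ∀ i, 0 < i → i < m → f^[i] x ∈ Icc e w := fun i hi him => by
    simpa [l, r, Nat.not_dvd_of_pos_of_lt hi him] using hitin i him.le
  refine ⟨x, hx₀, hx, fun j hj hjm hxj => ?_⟩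
  -- a shorter period would put `x` in `J₀ ∩ J₁ = {e}`, but `f e` leaves `J₁`
  have hxe : x = e := le_antisymm hx₀.2 (hxj ▸ hx₁ j hj hjm).1
  have hfx : e ≤ f x := (hx₁ 1 one_pos (lt_of_le_of_lt hj hjm)).1
  rw [hxe] at hfx
  exact hfx.not_gt hfe

theorem exists_horseshoe_of_orbit {a b : ℝ} {f : ℝ → ℝ} (hf : ContinuousOn f (Icc a b))
    (hmaps : MapsTo f (Icc a b) (Icc a b)) {z c : ℝ} (hfz : z ≤ f z) (hc : c ∈ Icc a b) {n : ℕ}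
    (h1 : f c < c) (h2 : c < z) (h3 : z ≤ f^[n] c) :
    ∃ t e w, a ≤ t ∧ t < e ∧ e < w ∧ w ≤ b ∧ f e ≤ t ∧ w ≤ f t ∧ w ≤ f w := by
  have horbit : ∀ j, f^[j] c ∈ Icc a b := fun j => hmaps.iterate j hc
  have hzb : z ≤ b := h3.trans (horbit n).2
  have hS : IsCompact (Icc c z ∩ (fun x => f x - x) ⁻¹' Ici 0) :=
    ((hf.mono (Icc_subset_Icc hc.1 hzb)).sub continuousOn_id).isCompact_Icc_inter_preimage
      isClosed_Ici
  obtain ⟨w, ⟨⟨hcw, hwz⟩, hfw⟩, hw⟩ := hS.exists_isLeast ⟨z, ⟨h2.le, le_rfl⟩, sub_nonneg.2 hfz⟩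
  replace hfw : w ≤ f w := sub_nonneg.1 hfw
  have hcw : c < w := hcw.lt_of_ne fun h => (h ▸ h1).not_ge hfw
  have hleft : ∀ x ∈ Ico c w, f x < x := fun x hx => by
    by_contra! hx'
    exact hx.2.not_ge (hw ⟨⟨hx.1, hx.2.le.trans hwz⟩, sub_nonneg.2 hx'⟩)
  obtain ⟨j, -, hj_lt, hj⟩ := Nat.exists_lt_forall_le_not_and_succ (P := fun j => w ≤ f^[j] c)
    (by simpa using hcw) (hwz.trans h3)
  set d := f^[j] c
  have hdw : d < w := not_le.1 (hj_lt j le_rfl)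
  have hfd : w ≤ f d := by rwa [iterate_succ_apply'] at hj
  have hdc : d < c := by
    by_contra! hcd
    exact (hleft d ⟨hcd, hdw⟩).not_ge (hdw.le.trans hfd)
  obtain ⟨i, hij, hi_gt, hi⟩ := Nat.exists_lt_forall_le_not_and_succ (P := fun i => f^[i] c ≤ d)
    (by simpa using hdc) le_rfl
  rw [iterate_succ_apply'] at hi
  exact ⟨d, f^[i] c, w, (horbit j).1, not_le.1 (hi_gt i le_rfl), not_le.1 (hj_lt i hij.le),
    hwz.trans hzb, hi, hfd, hfw⟩

theorem turbulentOn_Icc_of_surjOn_s12 {f : ℝ → ℝ} {a b t e w : ℝ} (hat : a ≤ t) (hte : t ≤ e)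
    (hew : e ≤ w) (hwb : w ≤ b) (h₀ : SurjOn f (Icc t e) (Icc t w))
    (h₁ : SurjOn f (Icc e w) (Icc t w)) : TurbulentOn f (Icc a b) :=
  ⟨Icc t e, Icc e w, ⟨Icc_subset_Icc hat (hew.trans hwb), t, e, hte, rfl⟩,
    ⟨Icc_subset_Icc (hat.trans hte) hwb, e, w, hew, rfl⟩,
    by rw [Icc_inter_Icc_eq_singleton hte hew]; exact subsingleton_singleton,
    by rw [Icc_union_Icc_eq_Icc hte hew]; exact subset_inter h₀ h₁⟩

theorem turbulentOn_and_exists_periodicPtOfPeriod_of_lt {a b : ℝ} {f : ℝ → ℝ}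
    (hf : ContinuousOn f (Icc a b)) (hmaps : MapsTo f (Icc a b) (Icc a b)) {z c : ℝ}
    (hfz : z ≤ f z) (hc : c ∈ Icc a b) {n : ℕ} (h1 : f c < c) (h2 : c < z) (h3 : z ≤ f^[n] c) :
    TurbulentOn f (Icc a b) ∧ ∀ m : ℕ, ∃ y ∈ Icc a b, PeriodicPtOfPeriod f m y := by
  obtain ⟨t, e, w, hat, hte, hew, hwb, hfe, hft, hfw⟩ :=
    exists_horseshoe_of_orbit hf hmaps hfz hc h1 h2 h3
  have hf' : ContinuousOn f (Icc t w) := hf.mono (Icc_subset_Icc hat hwb)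
  have h₀ : SurjOn f (Icc t e) (Icc t w) := (Icc_subset_Icc hfe hft).trans
    (intermediate_value_Icc' hte.le (hf'.mono (Icc_subset_Icc_right hew.le)))
  have h₁ : SurjOn f (Icc e w) (Icc t w) := (Icc_subset_Icc hfe hfw).trans
    (intermediate_value_Icc hew.le (hf'.mono (Icc_subset_Icc_left hte.le)))
  refine ⟨turbulentOn_Icc_of_surjOn_s12 hat hte.le hew.le hwb h₀ h₁, fun m => ?_⟩
  obtain ⟨y, hy, hper⟩ :=
    exists_periodicPtOfPeriod_of_horseshoe hte.le hew.le hf' h₀ h₁ (hfe.trans_lt hte) m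
  exact ⟨y, Icc_subset_Icc hat (hew.le.trans hwb) hy, hper⟩

theorem iterate_neg_conj (f : ℝ → ℝ) (k : ℕ) (x : ℝ) :
    (fun x => -f (-x))^[k] x = -f^[k] (-x) := by
  have h : Semiconj Neg.neg (fun x => -f (-x)) f := fun x => neg_neg _
  exact neg_eq_iff_eq_neg.1 (h.iterate_right k x)

theorem TurbulentOn.of_neg_conj {f : ℝ → ℝ} {J : Set ℝ}
    (h : TurbulentOn (fun x => -f (-x)) (-J)) : TurbulentOn f J := by
  obtain ⟨J₀, J₁, ⟨hJ₀, p₀, q₀, hpq₀, rfl⟩, ⟨hJ₁, p₁, q₁, hpq₁, rfl⟩, hsing, hcov⟩ := h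
  have himage : ∀ K : Set ℝ, (fun x => -f (-x)) '' K = -(f '' (-K)) := fun K => by
    ext; simp [neg_eq_iff_eq_neg]
  refine ⟨-Icc p₀ q₀, -Icc p₁ q₁, ⟨?_, -q₀, -p₀, neg_le_neg hpq₀, neg_Icc _ _⟩,
    ⟨?_, -q₁, -p₁, neg_le_neg hpq₁, neg_Icc _ _⟩, ?_, ?_⟩
  · simpa using neg_subset_neg.2 hJ₀
  · simpa using neg_subset_neg.2 hJ₁
  · rw [← inter_neg, ← image_neg_eq_neg]
    exact hsing.image _
  · rw [himage, himage, ← inter_neg] at hcov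
    rw [← union_neg, neg_subset]
    exact hcov

theorem PeriodicPtOfPeriod.of_neg_conj {f : ℝ → ℝ} {m : ℕ} {y : ℝ}
    (h : PeriodicPtOfPeriod (fun x => -f (-x)) m y) : PeriodicPtOfPeriod f m (-y) := by
  refine ⟨?_, fun j hj hjm hfj => h.2 j hj hjm ?_⟩
  · rw [← neg_eq_iff_eq_neg, ← iterate_neg_conj, h.1]
  · rw [iterate_neg_conj, hfj, neg_neg]

theorem turbulentOn_and_exists_periodicPtOfPeriod_of_gt {a b : ℝ} {f : ℝ → ℝ}
    (hf : ContinuousOn f (Icc a b)) (hmaps : MapsTo f (Icc a b) (Icc a b)) {z c : ℝ}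
    (hfz : f z ≤ z) (hc : c ∈ Icc a b) {n : ℕ} (h1 : f^[n] c ≤ z) (h2 : z < c) (h3 : c < f c) :
    TurbulentOn f (Icc a b) ∧ ∀ m : ℕ, ∃ y ∈ Icc a b, PeriodicPtOfPeriod f m y := by
  have hneg : MapsTo Neg.neg (Icc (-b) (-a)) (Icc a b) := fun x hx => by
    simpa [← neg_Icc] using hx
  have hg : ContinuousOn (fun x => -f (-x)) (Icc (-b) (-a)) :=
    (hf.comp continuousOn_neg hneg).neg
  have hgmaps : MapsTo (fun x => -f (-x)) (Icc (-b) (-a)) (Icc (-b) (-a)) := fun x hx => by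
    simpa [← neg_Icc] using hmaps (hneg hx)
  obtain ⟨hturb, hper⟩ := turbulentOn_and_exists_periodicPtOfPeriod_of_lt hg hgmaps (z := -z)
    (c := -c) (by simpa using hfz) (by simpa [← neg_Icc] using hc) (by simpa using h3)
    (neg_lt_neg h2) (by simpa [iterate_neg_conj] using h1)
  refine ⟨.of_neg_conj (by rwa [neg_Icc]), fun m => ?_⟩
  obtain ⟨y, hy, hper⟩ := hper m
  exact ⟨-y, by simpa [← neg_Icc] using hy, hper.of_neg_conj⟩

theorem stmt_12_general (a b : ℝ) (f : ℝ → ℝ)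
    (hf : ContinuousOn f (Set.Icc a b)) (hmaps : Set.MapsTo f (Set.Icc a b) (Set.Icc a b))
    (z : ℝ) (hfz : f z = z)
    (c : ℝ) (hc : c ∈ Set.Icc a b) (n : ℕ)
    (h : (f c < c ∧ c < z ∧ z ≤ f^[n] c) ∨ (f^[n] c ≤ z ∧ z < c ∧ c < f c)) :
    TurbulentOn f (Set.Icc a b) ∧
      ∀ m : ℕ, 1 ≤ m → ∃ y ∈ Set.Icc a b, PeriodicPtOfPeriod f m y := by
  obtain ⟨hturb, hper⟩ := h.elim
    (fun ⟨h1, h2, h3⟩ =>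
      turbulentOn_and_exists_periodicPtOfPeriod_of_lt hf hmaps hfz.ge hc h1 h2 h3)
    (fun ⟨h1, h2, h3⟩ =>
      turbulentOn_and_exists_periodicPtOfPeriod_of_gt hf hmaps hfz.le hc h1 h2 h3)
  exact ⟨hturb, fun m _ => hper m⟩

theorem stmt_12 (a b : ℝ) (hab : a ≤ b) (f : ℝ → ℝ)
    (hf : ContinuousOn f (Set.Icc a b)) (hmaps : Set.MapsTo f (Set.Icc a b) (Set.Icc a b))
    (z : ℝ) (hz : z ∈ Set.Icc a b) (hfz : f z = z)
    (c : ℝ) (hc : c ∈ Set.Icc a b) (n : ℕ) (hn : 2 ≤ n)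
    (h : (f c < c ∧ c < z ∧ z ≤ f^[n] c) ∨ (f^[n] c ≤ z ∧ z < c ∧ c < f c)) :
    TurbulentOn f (Set.Icc a b) ∧
      ∀ m : ℕ, 1 ≤ m → ∃ y ∈ Set.Icc a b, PeriodicPtOfPeriod f m y :=
  stmt_12_general a b f hf hmaps z hfz c hc n h
end

section
/- Let I be a compact interval in ℝ and f : I → I a continuous map. Suppose there exist points d < z₀ in I and a fixed point z of f with z₀ ≤ z such that f²(d) = z₀, f²(z₀) = z₀, and for all x with d < x < z₀ one has f(x) > z and f²(x) < z₀, and there exists u₁ with d < u₁ < z₀ such that f²(u₁) = d. Then for every n ≥ 1, f has a periodic point of period 2n; in particular f has periodic points of all even periods. -/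
open Filter Set Function

/-! The second iterate `F = f²` is a horseshoe on `[d, z₀]`: both `J₀ = [d, u₁]` and
`J₁ = [u₁, z₀]` are mapped by `F` over `[d, z₀]`, since `F d = z₀`, `F u₁ = d` and `F z₀ = z₀`.
Following the loop `J₀ → J₁ → ⋯ → J₁ → J₀` of length `n` produces a point `y` with `Fⁿ y = y`.
Its orbit avoids `d` and `z₀` (both end on the fixed point `z₀ ∉ J₀`), and `y` cannot return
before time `n` because `J₀ ∩ J₁ = {u₁}` and `F u₁ = d`. Finally `f` sends `(d, z₀)` above
`z ≥ z₀`, so odd iterates of `f` never return to `y`, and its least period under `f` is `2n`. -/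

section ExactImage

variable {g : ℝ → ℝ} {a b t : ℝ}

lemma ContinuousOn.forall_le_apply_of_eq_imp_eq_left (hg : ContinuousOn g (Icc a b))
    (hb : t ≤ g b) (huniq : ∀ w ∈ Icc a b, g w = t → w = a) : ∀ x ∈ Icc a b, t ≤ g x := by
  intro x hx
  by_contra! hlt
  obtain ⟨w, hw, hgw⟩ := intermediate_value_Icc hx.2 (hg.mono (Icc_subset_Icc hx.1 le_rfl))
    ⟨hlt.le, hb⟩
  have hwa := huniq w ⟨hx.1.trans hw.1, hw.2⟩ hgw
  have hxw : x = w := le_antisymm hw.1 (hwa ▸ hx.1)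
  exact hlt.ne (hxw ▸ hgw)

lemma ContinuousOn.forall_apply_le_of_eq_imp_eq_right (hg : ContinuousOn g (Icc a b))
    (ha : g a ≤ t) (huniq : ∀ w ∈ Icc a b, g w = t → w = b) : ∀ x ∈ Icc a b, g x ≤ t := by
  intro x hx
  by_contra! hlt
  obtain ⟨w, hw, hgw⟩ := intermediate_value_Icc hx.1 (hg.mono (Icc_subset_Icc le_rfl hx.2))
    ⟨ha, hlt.le⟩
  have hwb := huniq w ⟨hw.1, hw.2.trans hx.2⟩ hgw
  have hxw : x = w := le_antisymm (hwb ▸ hx.2) hw.2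
  exact hlt.ne' (hxw ▸ hgw)

/-- Take `q` the first point where `g = s` and `p` the last point before `q` where `g = r`:
on `[p, q]` the values `r` and `s` are attained only at the endpoints, which keeps `g` in
`[r, s]`. -/
lemma ContinuousOn.exists_Icc_image_eq_of_endpoints {r s : ℝ} (hab : a ≤ b) (hrs : r ≤ s)
    (hg : ContinuousOn g (Icc a b)) (hga : g a = r) (hgb : g b = s) :
    ∃ p q, Icc p q ⊆ Icc a b ∧ p ≤ q ∧ g '' Icc p q = Icc r s := by
  set S := Icc a b ∩ g ⁻¹' {s}
  have hSbdd : BddBelow S := ⟨a, fun x hx => hx.1.1⟩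
  have hq : sInf S ∈ S :=
    (hg.preimage_isClosed_of_isClosed isClosed_Icc isClosed_singleton).csInf_mem
      ⟨b, right_mem_Icc.2 hab, hgb⟩ hSbdd
  set q := sInf S
  set T := Icc a q ∩ g ⁻¹' {r}
  have hTbdd : BddAbove T := ⟨q, fun x hx => hx.1.2⟩
  have hg_aq : ContinuousOn g (Icc a q) := hg.mono (Icc_subset_Icc le_rfl hq.1.2)
  have hp : sSup T ∈ T :=
    (hg_aq.preimage_isClosed_of_isClosed isClosed_Icc isClosed_singleton).csSup_mem
      ⟨a, left_mem_Icc.2 hq.1.1, hga⟩ hTbdd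
  set p := sSup T
  have hsub : Icc p q ⊆ Icc a b := Icc_subset_Icc hp.1.1 hq.1.2
  have hg' : ContinuousOn g (Icc p q) := hg.mono hsub
  refine ⟨p, q, hsub, hp.1.2, subset_antisymm ?_ ?_⟩
  · rintro _ ⟨x, hx, rfl⟩
    refine ⟨hg'.forall_le_apply_of_eq_imp_eq_left (hq.2.symm ▸ hrs) (fun w hw hgw => ?_) x hx,
      hg'.forall_apply_le_of_eq_imp_eq_right (hp.2.symm ▸ hrs) (fun w hw hgw => ?_) x hx⟩
    · exact le_antisymm (le_csSup hTbdd ⟨⟨hp.1.1.trans hw.1, hw.2⟩, hgw⟩) hw.1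
    · exact le_antisymm hw.2 (csInf_le hSbdd ⟨hsub hw, hgw⟩)
  · have hgp : g p = r := hp.2
    have hgq : g q = s := hq.2
    simpa only [hgp, hgq] using intermediate_value_Icc hp.1.2 hg'

lemma ContinuousOn.exists_Icc_image_eq {p q r s : ℝ} (hrs : r ≤ s)
    (hg : ContinuousOn g (Icc p q)) (hsurj : SurjOn g (Icc p q) (Icc r s)) :
    ∃ p' q', Icc p' q' ⊆ Icc p q ∧ p' ≤ q' ∧ g '' Icc p' q' = Icc r s := by
  obtain ⟨c, hc, hgc⟩ := hsurj (left_mem_Icc.2 hrs)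
  obtain ⟨e, he, hge⟩ := hsurj (right_mem_Icc.2 hrs)
  rcases le_total c e with hce | hec
  · obtain ⟨p', q', hsub, hpq, himg⟩ :=
      (hg.mono (Icc_subset_Icc hc.1 he.2)).exists_Icc_image_eq_of_endpoints hce hrs hgc hge
    exact ⟨p', q', hsub.trans (Icc_subset_Icc hc.1 he.2), hpq, himg⟩
  · -- `s` is attained left of `r`, so `-g` goes from `-s` up to `-r` on `[e, c]`
    obtain ⟨p', q', hsub, hpq, himg⟩ :=
      (hg.mono (Icc_subset_Icc he.1 hc.2)).neg.exists_Icc_image_eq_of_endpoints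
        hec (neg_le_neg hrs) (congrArg Neg.neg hge) (congrArg Neg.neg hgc)
    refine ⟨p', q', hsub.trans (Icc_subset_Icc he.1 hc.2), hpq, ?_⟩
    have hneg : g '' Icc p' q' = -((-g) '' Icc p' q') := by
      rw [← image_neg_eq_neg, image_image]
      simp
    rw [hneg, himg, neg_Icc, neg_neg, neg_neg]

end ExactImage

lemma ContinuousOn.iterate_of_mapsTo {α : Type*} [TopologicalSpace α] {F : α → α}
    {J : ℕ → Set α} {K : Set α} {k : ℕ} (hF : ∀ i < k, ContinuousOn F (J i))
    (hK : ∀ i < k, MapsTo F^[i] K (J i)) : ContinuousOn F^[k] K := by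
  induction k with
  | zero => exact continuousOn_id
  | succ k ih =>
    rw [iterate_succ']
    exact (hF k k.lt_succ_self).comp (ih (fun i hi => hF i (hi.trans k.lt_succ_self))
      (fun i hi => hK i (hi.trans k.lt_succ_self))) (hK k k.lt_succ_self)

section Itinerary

variable {F : ℝ → ℝ} {J : ℕ → Set ℝ} {n : ℕ}

lemma exists_Icc_mapsTo_iterate_of_surjOn (hJ : ∀ i ≤ n, ∃ p q, p ≤ q ∧ J i = Icc p q)
    (hF : ∀ i < n, ContinuousOn F (J i)) (hsurj : ∀ i < n, SurjOn F (J i) (J (i + 1))) :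
    ∀ k ≤ n, ∃ p q, p ≤ q ∧ (∀ i ≤ k, MapsTo F^[i] (Icc p q) (J i)) ∧
      F^[k] '' Icc p q = J k := by
  intro k
  induction k with
  | zero =>
    intro hn
    obtain ⟨p, q, hpq, hJ₀⟩ := hJ 0 hn
    refine ⟨p, q, hpq, fun i hi => ?_, by simp [hJ₀]⟩
    rw [Nat.le_zero.mp hi, hJ₀]
    exact mapsTo_id _
  | succ k ih =>
    intro hk
    obtain ⟨p, q, -, hmaps, himg⟩ := ih (Nat.le_of_succ_le hk)
    obtain ⟨r, s, hrs, hJk⟩ := hJ (k + 1) hk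
    have hcont : ContinuousOn F^[k + 1] (Icc p q) :=
      ContinuousOn.iterate_of_mapsTo (fun i hi => hF i (hi.trans_le hk))
        (fun i hi => hmaps i (Nat.le_of_lt_succ hi))
    have hsurj' : SurjOn F^[k + 1] (Icc p q) (Icc r s) := by
      rw [← hJk, SurjOn, iterate_succ', image_comp, himg]
      exact hsurj k hk
    obtain ⟨p', q', hsub, hpq', himg'⟩ := hcont.exists_Icc_image_eq hrs hsurj'
    refine ⟨p', q', hpq', fun i hi => ?_, himg'.trans hJk.symm⟩
    rcases Nat.of_le_succ hi with hi | rfl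
    · exact (hmaps i hi).mono_left hsub
    · exact hJk ▸ himg' ▸ mapsTo_image _ _

lemma exists_isPeriodicPt_of_surjOn (hJ : ∀ i ≤ n, ∃ p q, p ≤ q ∧ J i = Icc p q)
    (hF : ∀ i < n, ContinuousOn F (J i)) (hsurj : ∀ i < n, SurjOn F (J i) (J (i + 1)))
    (hloop : J 0 ⊆ J n) : ∃ y, (∀ i ≤ n, F^[i] y ∈ J i) ∧ IsPeriodicPt F n y := by
  obtain ⟨p, q, hpq, hmaps, himg⟩ := exists_Icc_mapsTo_iterate_of_surjOn hJ hF hsurj n le_rfl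
  have hcont : ContinuousOn F^[n] (Icc p q) :=
    ContinuousOn.iterate_of_mapsTo hF (fun i hi => hmaps i hi.le)
  have hsurj' : SurjOn F^[n] (Icc p q) (Icc p q) := by
    rw [SurjOn, himg]
    exact fun x hx => hloop (hmaps 0 n.zero_le hx)
  obtain ⟨y, hy, hfix⟩ := exists_mem_Icc_isFixedPt_of_surjOn hcont hpq hsurj'
  exact ⟨y, fun i hi => hmaps i hi hy, hfix⟩

end Itinerary

lemma periodicPtOfPeriod_of_horseshoe {F : ℝ → ℝ} {d u z₀ y : ℝ} {n : ℕ} (hu : u < z₀)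
    (hFd : F d = z₀) (hFu : F u = d) (hFz₀ : F z₀ = z₀) (hy : y ∈ Icc d u)
    (horb : ∀ i, 0 < i → i < n → F^[i] y ∈ Icc u z₀) (hper : IsPeriodicPt F n y) :
    (∀ k < n, F^[k] y ∈ Ioo d z₀) ∧ PeriodicPtOfPeriod F n y := by
  have hne_z₀ : ∀ k ≤ n, F^[k] y ≠ z₀ := by
    intro k hk hk₀
    have : F^[n] y = z₀ := by
      rw [← Nat.sub_add_cancel hk, iterate_add_apply, hk₀, iterate_fixed hFz₀]
    exact hu.not_ge ((hper.eq.symm.trans this) ▸ hy.2)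
  have hne_d : ∀ k < n, F^[k] y ≠ d := fun k hk hkd =>
    hne_z₀ (k + 1) hk (by rw [iterate_succ_apply', hkd, hFd])
  have hmem : ∀ k < n, F^[k] y ∈ Icc d z₀ := by
    intro k hk
    rcases k.eq_zero_or_pos with rfl | hk₀
    · exact Icc_subset_Icc le_rfl hu.le hy
    · exact Icc_subset_Icc (hy.1.trans hy.2) le_rfl (horb k hk₀ hk)
  refine ⟨fun k hk => ⟨(hmem k hk).1.lt_of_ne' (hne_d k hk),
    (hmem k hk).2.lt_of_ne (hne_z₀ k hk.le)⟩, hper, fun k hk₀ hkn hret => ?_⟩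
  -- a return before time `n` forces `y ∈ J₀ ∩ J₁ = {u}`, whose image `d` is not in `J₁`
  have hyu : y = u := le_antisymm hy.2 (hret ▸ (horb k hk₀ hkn).1)
  exact hne_d 1 (by omega) (by rw [iterate_one, hyu, hFu])

lemma periodicPtOfPeriod_two_mul {f : ℝ → ℝ} {A : Set ℝ} {n : ℕ} {y : ℝ} (hn : 0 < n)
    (hper : PeriodicPtOfPeriod f^[2] n y) (horb : ∀ k < n, (f^[2])^[k] y ∈ A)
    (hA : ∀ x ∈ A, f x ∉ A) : PeriodicPtOfPeriod f (2 * n) y := by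
  refine ⟨by rw [iterate_mul]; exact hper.1, fun j hj₀ hjn hret => ?_⟩
  obtain ⟨k, rfl | rfl⟩ := j.even_or_odd'
  · rw [iterate_mul] at hret
    exact hper.2 k (by omega) (by omega) hret
  · rw [iterate_succ_apply', iterate_mul] at hret
    have hyA : y ∈ A := horb 0 hn
    exact hA _ (horb k (by omega)) (by rwa [hret])

theorem stmt_16_general (a b : ℝ) (f : ℝ → ℝ)
    (hf : ContinuousOn f (Set.Icc a b)) (hmaps : Set.MapsTo f (Set.Icc a b) (Set.Icc a b))
    (d z₀ z : ℝ) (hd : d ∈ Set.Icc a b) (hz₀ : z₀ ∈ Set.Icc a b)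
    (hz₀z : z₀ ≤ z)
    (hfd : f^[2] d = z₀) (hfz₀ : f^[2] z₀ = z₀)
    (hbetween : ∀ x : ℝ, d < x → x < z₀ → z < f x ∧ f^[2] x < z₀)
    (hu : ∃ u₁ : ℝ, d < u₁ ∧ u₁ < z₀ ∧ f^[2] u₁ = d) :
    ∀ n : ℕ, 1 ≤ n → ∃ y ∈ Set.Icc a b, PeriodicPtOfPeriod f (2 * n) y := by
  obtain ⟨u₁, hdu₁, hu₁z₀, hfu₁⟩ := hu
  intro n hn
  have hcont : ContinuousOn f^[2] (Icc d z₀) :=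
    (hf.iterate hmaps 2).mono (Icc_subset_Icc hd.1 hz₀.2)
  have hJ₀ : SurjOn f^[2] (Icc d u₁) (Icc d z₀) := by
    have h := intermediate_value_Icc' hdu₁.le (hcont.mono (Icc_subset_Icc le_rfl hu₁z₀.le))
    rwa [hfd, hfu₁] at h
  have hJ₁ : SurjOn f^[2] (Icc u₁ z₀) (Icc d z₀) := by
    have h := intermediate_value_Icc hu₁z₀.le (hcont.mono (Icc_subset_Icc hdu₁.le le_rfl))
    rwa [hfz₀, hfu₁] at h
  let J : ℕ → Set ℝ := fun i => if i = 0 ∨ i = n then Icc d u₁ else Icc u₁ z₀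
  have hJ : ∀ i, (∃ p q, p ≤ q ∧ J i = Icc p q) ∧ J i ⊆ Icc d z₀ ∧
      SurjOn f^[2] (J i) (Icc d z₀) := by
    intro i
    by_cases hi : i = 0 ∨ i = n
    · simp only [J, if_pos hi]
      exact ⟨⟨d, u₁, hdu₁.le, rfl⟩, Icc_subset_Icc le_rfl hu₁z₀.le, hJ₀⟩
    · simp only [J, if_neg hi]
      exact ⟨⟨u₁, z₀, hu₁z₀.le, rfl⟩, Icc_subset_Icc hdu₁.le le_rfl, hJ₁⟩
  obtain ⟨y, hyJ, hper⟩ := exists_isPeriodicPt_of_surjOn (J := J) (n := n) (fun i _ => (hJ i).1)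
    (fun i _ => hcont.mono (hJ i).2.1) (fun i _ => (hJ (i + 1)).2.1.trans (hJ i).2.2)
    (by simp [J])
  have hy : y ∈ Icc d u₁ := by simpa [J] using hyJ 0 n.zero_le
  obtain ⟨horb, hperF⟩ := periodicPtOfPeriod_of_horseshoe hu₁z₀ hfd hfu₁ hfz₀ hy
    (fun i hi₀ hin => by simpa [J, hi₀.ne', hin.ne] using hyJ i hin.le) hper
  have hswap : ∀ x ∈ Ioo d z₀, f x ∉ Ioo d z₀ := fun x hx hfx =>
    (hz₀z.trans_lt (hbetween x hx.1 hx.2).1).not_gt hfx.2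
  exact ⟨y, Icc_subset_Icc hd.1 (hu₁z₀.le.trans hz₀.2) hy,
    periodicPtOfPeriod_two_mul hn hperF horb hswap⟩

theorem stmt_16 (a b : ℝ) (hab : a ≤ b) (f : ℝ → ℝ)
    (hf : ContinuousOn f (Set.Icc a b)) (hmaps : Set.MapsTo f (Set.Icc a b) (Set.Icc a b))
    (d z₀ z : ℝ) (hd : d ∈ Set.Icc a b) (hz₀ : z₀ ∈ Set.Icc a b) (hdz₀ : d < z₀)
    (hz : z ∈ Set.Icc a b) (hfz : f z = z) (hz₀z : z₀ ≤ z)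
    (hfd : f^[2] d = z₀) (hfz₀ : f^[2] z₀ = z₀)
    (hbetween : ∀ x : ℝ, d < x → x < z₀ → z < f x ∧ f^[2] x < z₀)
    (hu : ∃ u₁ : ℝ, d < u₁ ∧ u₁ < z₀ ∧ f^[2] u₁ = d) :
    ∀ n : ℕ, 1 ≤ n → ∃ y ∈ Set.Icc a b, PeriodicPtOfPeriod f (2 * n) y :=
  stmt_16_general a b f hf hmaps d z₀ z hd hz₀ hz₀z hfd hfz₀ hbetween hu
end

section
/- Let I be a compact interval in ℝ and f : I → I a continuous map. Suppose there exist points d < z₀ in I such that f²(d) = z₀, f²(z₀) = z₀, f²(x) < z₀ for all x with d < x < z₀, and there exists u₁ with d ≤ u₁ ≤ z₀ such that f²(u₁) = d and u₁ = min{x ∈ [d, z₀] : f²(x) = d}. Then f² is turbulent on [d, z₀]; indeed f²([d, u₁]) ∩ f²([u₁, z₀]) ⊇ [d, z₀] = [d, u₁] ∪ [u₁, z₀]. -/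
open Filter Set Function

theorem turbulentOn_Icc_of_subset_image {g : ℝ → ℝ} {p q r : ℝ} (hpq : p ≤ q) (hqr : q ≤ r)
    (h₀ : Icc p r ⊆ g '' Icc p q) (h₁ : Icc p r ⊆ g '' Icc q r) :
    TurbulentOn g (Icc p r) := by
  refine ⟨Icc p q, Icc q r, ⟨Icc_subset_Icc_right hqr, p, q, hpq, rfl⟩,
    ⟨Icc_subset_Icc_left hpq, q, r, hqr, rfl⟩, ?_, ?_⟩
  · rw [Icc_inter_Icc_eq_singleton hpq hqr]
    exact subsingleton_singleton
  · rw [Icc_union_Icc_eq_Icc hpq hqr]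
    exact subset_inter h₀ h₁

theorem stmt_17_general (a b : ℝ) (f : ℝ → ℝ)
    (hf : ContinuousOn f (Set.Icc a b)) (hmaps : Set.MapsTo f (Set.Icc a b) (Set.Icc a b))
    (d z₀ u₁ : ℝ) (hd : d ∈ Set.Icc a b) (hz₀ : z₀ ∈ Set.Icc a b)
    (hfd : f^[2] d = z₀) (hfz₀ : f^[2] z₀ = z₀)
    (hu₁ : u₁ ∈ Set.Icc d z₀) (hfu₁ : f^[2] u₁ = d) :
    TurbulentOn (f^[2]) (Set.Icc d z₀) ∧
      Set.Icc d z₀ ⊆ f^[2] '' Set.Icc d u₁ ∩ f^[2] '' Set.Icc u₁ z₀ ∧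
      Set.Icc d z₀ = Set.Icc d u₁ ∪ Set.Icc u₁ z₀ := by
  obtain ⟨hdu, huz⟩ := hu₁
  have hg : ContinuousOn (f^[2]) (Icc d z₀) :=
    (hf.iterate hmaps 2).mono (Icc_subset_Icc hd.1 hz₀.2)
  have h₀ : Icc d z₀ ⊆ f^[2] '' Icc d u₁ := by
    simpa only [hfd, hfu₁] using intermediate_value_Icc' hdu (hg.mono (Icc_subset_Icc_right huz))
  have h₁ : Icc d z₀ ⊆ f^[2] '' Icc u₁ z₀ := by
    simpa only [hfu₁, hfz₀] using intermediate_value_Icc huz (hg.mono (Icc_subset_Icc_left hdu))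
  exact ⟨turbulentOn_Icc_of_subset_image hdu huz h₀ h₁, subset_inter h₀ h₁,
    (Icc_union_Icc_eq_Icc hdu huz).symm⟩

theorem stmt_17 (a b : ℝ) (hab : a ≤ b) (f : ℝ → ℝ)
    (hf : ContinuousOn f (Set.Icc a b)) (hmaps : Set.MapsTo f (Set.Icc a b) (Set.Icc a b))
    (d z₀ u₁ : ℝ) (hd : d ∈ Set.Icc a b) (hz₀ : z₀ ∈ Set.Icc a b) (hdz₀ : d < z₀)
    (hfd : f^[2] d = z₀) (hfz₀ : f^[2] z₀ = z₀)
    (hbetween : ∀ x : ℝ, d < x → x < z₀ → f^[2] x < z₀)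
    (hu₁ : u₁ ∈ Set.Icc d z₀) (hfu₁ : f^[2] u₁ = d)
    (hmin : IsLeast {x : ℝ | x ∈ Set.Icc d z₀ ∧ f^[2] x = d} u₁) :
    TurbulentOn (f^[2]) (Set.Icc d z₀) ∧
      Set.Icc d z₀ ⊆ f^[2] '' Set.Icc d u₁ ∩ f^[2] '' Set.Icc u₁ z₀ ∧
      Set.Icc d z₀ = Set.Icc d u₁ ∪ Set.Icc u₁ z₀ :=
  stmt_17_general a b f hf hmaps d z₀ u₁ hd hz₀ hfd hfz₀ hu₁ hfu₁
end
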